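/- Let X be a topological space, let n ≥ 2 and k ≥ 1. Then the following are equivalent: (i) there exist open sets U₁, …, U_k covering Xⁿ and, for each j ∈ {1, …, k}, a continuous map s_j : U_j → C([0,1], X) such that for every x = (x₁, …, xₙ) ∈ U_j and every i ∈ {1, …, n} one has s_j(x)((i−1)/(n−1)) = xᵢ; (ii) there exist open sets V₁, …, V_k covering Xⁿ such that for each j ∈ {1, …, k} and all i, l ∈ {1, …, n}, the restrictions to V_j of the i-th and l-th coordinate projections Xⁿ → X are homotopic as continuous maps V_j → X. -/

import Mathlib

/-!
If `s` is a continuous section over `U`, sliding the evaluation time of `s x` from `i/(n-1)`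
to `l/(n-1)` is a homotopy between the `i`-th and `l`-th projections on `U`.

Conversely, on `V` pick homotopies `Hᵢ` from the `i`-th projection to the `0`-th. The path
through `x` is a zigzag: near the grid point `i/(n-1)` it runs along `Hᵢ(·, x)` from `xᵢ` out
to `x₀`, reached exactly at the midpoints between grid points, where consecutive legs meet.
The legs are glued over a finite closed cover, so the path depends continuously on `x`.
-/

open Set unitInterval

theorem ContinuousMap.homotopic_of_eq_eval {Y T X : Type*} [TopologicalSpace Y]
    [TopologicalSpace T] [LocallyCompactSpace T] [TopologicalSpace X] {f₀ f₁ : C(Y, X)}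
    (s : C(Y, C(T, X))) {a b : T} (hab : Joined a b)
    (h₀ : ∀ y, f₀ y = s y a) (h₁ : ∀ y, f₁ y = s y b) : f₀.Homotopic f₁ :=
  ⟨{ toFun := fun p => s p.2 (hab.somePath p.1)
     continuous_toFun := by fun_prop
     map_zero_left := fun y => by simp [h₀]
     map_one_left := fun y => by simp [h₁] }⟩

instance unitInterval.pathConnectedSpace : PathConnectedSpace I :=
  isPathConnected_iff_pathConnectedSpace.1 ((convex_Icc 0 1).isPathConnected ⟨0, by simp⟩)

theorem natCast_div_mem_unitInterval {i m : ℕ} (h : i ≤ m) : (i : ℝ) / m ∈ I :=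
  ⟨by positivity, div_le_one_of_le₀ (Nat.cast_le.2 h) m.cast_nonneg⟩

theorem natCast_mul_eq_of_eq_div {m i : ℕ} (hi : i ≤ m) {t : ℝ} (ht : t = i / m) :
    (m : ℝ) * t = i := by
  rcases m.eq_zero_or_pos with rfl | hm
  · simp [Nat.le_zero.1 hi]
  · rw [ht, mul_div_cancel₀ _ (by positivity)]

namespace unitInterval

def gridCell (m i : ℕ) : Set I := {t | |(m : ℝ) * t - i| ≤ 1 / 2}

theorem isClosed_gridCell (m i : ℕ) : IsClosed (gridCell m i) :=
  isClosed_le (by fun_prop) continuous_const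

noncomputable def nearestGridIndex (m : ℕ) (t : I) : Fin (m + 1) :=
  ⟨⌊(m : ℝ) * t + 1 / 2⌋₊, (Nat.floor_lt (by have := t.2.1; positivity)).2 <| by
    have : (m : ℝ) * t ≤ m := mul_le_of_le_one_right m.cast_nonneg t.2.2
    push_cast; linarith⟩

theorem mem_gridCell_nearestGridIndex (m : ℕ) (t : I) :
    t ∈ gridCell m (nearestGridIndex m t) := by
  have h0 : 0 ≤ (m : ℝ) * t + 1 / 2 := by have := t.2.1; positivity
  have h1 := Nat.floor_le h0
  have h2 := Nat.lt_floor_add_one ((m : ℝ) * t + 1 / 2)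
  simp only [gridCell, nearestGridIndex, mem_ofPred_eq, abs_le]
  constructor <;> linarith

end unitInterval

namespace ContinuousMap.Homotopy

variable {Y X : Type*} [TopologicalSpace Y] [TopologicalSpace X] {m : ℕ}
  {f : Fin (m + 1) → C(Y, X)} {g : C(Y, X)}

/-- Runs along `H i` from `f i` at the grid point `i / m` to `g` at distance `1 / (2m)` from it. -/
noncomputable def gridLeg (H : ∀ i, (f i).Homotopy g) (i : Fin (m + 1)) : C(Y × I, X) :=
  (H i : C(I × Y, X)).comp
    ⟨fun p => (projIcc 0 1 zero_le_one (2 * |(m : ℝ) * p.2 - i|), p.1), by fun_prop⟩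

theorem gridLeg_apply (H : ∀ i, (f i).Homotopy g) (i : Fin (m + 1)) (p : Y × I) :
    gridLeg H i p = H i (projIcc 0 1 zero_le_one (2 * |(m : ℝ) * p.2 - i|), p.1) :=
  rfl

theorem gridLeg_eq_of_mem_gridCell (H : ∀ i, (f i).Homotopy g) {i j : Fin (m + 1)} {p : Y × I}
    (hi : p.2 ∈ gridCell m i) (hj : p.2 ∈ gridCell m j) : gridLeg H i p = gridLeg H j p := by
  rcases eq_or_ne i j with rfl | hij
  · rfl
  -- distinct grid points are `1` apart, so `p.2` lies on the boundary of both cells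
  have hdist : (1 : ℝ) ≤ |(i : ℝ) - j| := by
    have : (1 : ℤ) ≤ |(i : ℤ) - j| := Int.one_le_abs (sub_ne_zero.2 (by omega))
    exact_mod_cast this
  have htri : |(i : ℝ) - j| ≤ |(m : ℝ) * p.2 - j| + |(m : ℝ) * p.2 - i| :=
    calc |(i : ℝ) - j| = |((m : ℝ) * p.2 - j) - ((m : ℝ) * p.2 - i)| := by ring_nf
      _ ≤ _ := abs_sub _ _
  simp only [gridCell, mem_ofPred_eq] at hi hj
  have hi' : |(m : ℝ) * p.2 - i| = 1 / 2 := by linarith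
  have hj' : |(m : ℝ) * p.2 - j| = 1 / 2 := by linarith
  simp [gridLeg_apply, hi', hj']

noncomputable def gridPath (H : ∀ i, (f i).Homotopy g) : C(Y × I, X) where
  toFun p := gridLeg H (nearestGridIndex m p.2) p
  continuous_toFun := by
    refine (locallyFinite_of_finite fun i : Fin (m + 1) => Prod.snd ⁻¹' gridCell m i).continuous
      ?_ (fun i => (isClosed_gridCell m i).preimage continuous_snd) fun i => ?_
    · exact eq_univ_of_forall fun p => mem_iUnion.2 ⟨_, mem_gridCell_nearestGridIndex m p.2⟩
    · exact (gridLeg H i).continuous.continuousOn.congr fun p hp =>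
        gridLeg_eq_of_mem_gridCell H (mem_gridCell_nearestGridIndex m p.2) hp

theorem gridPath_eq_gridLeg (H : ∀ i, (f i).Homotopy g) {i : Fin (m + 1)} {p : Y × I}
    (hp : p.2 ∈ gridCell m i) : gridPath H p = gridLeg H i p :=
  gridLeg_eq_of_mem_gridCell H (mem_gridCell_nearestGridIndex m p.2) hp

theorem gridPath_apply_of_eq_div (H : ∀ i, (f i).Homotopy g) (y : Y) (i : Fin (m + 1)) {t : I}
    (ht : (t : ℝ) = i / m) : gridPath H (y, t) = f i y := by
  have hzero : (m : ℝ) * t - i = 0 := sub_eq_zero.2 (natCast_mul_eq_of_eq_div i.is_le ht)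
  have hmem : t ∈ gridCell m i := by simp [gridCell, hzero]
  rw [gridPath_eq_gridLeg (p := (y, t)) H hmem, gridLeg_apply, hzero]
  simp

end ContinuousMap.Homotopy

theorem ContinuousMap.exists_path_family_through {Y X : Type*} [TopologicalSpace Y]
    [TopologicalSpace X] {m : ℕ} {f : Fin (m + 1) → C(Y, X)} {g : C(Y, X)}
    (h : ∀ i, (f i).Homotopic g) :
    ∃ s : C(Y, C(I, X)), ∀ y (i : Fin (m + 1)) (t : I), (t : ℝ) = i / m → s y t = f i y :=
  ⟨(Homotopy.gridPath fun i => (h i).some).curry, fun y i _ ht => by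
    rw [curry_apply, Homotopy.gridPath_apply_of_eq_div _ y i ht]⟩

theorem statement3_general {X : Type*} [TopologicalSpace X] (n k : ℕ) (hn : 2 ≤ n) :
    (∃ U : Fin k → Set (Fin n → X), (∀ j, IsOpen (U j)) ∧ (⋃ j, U j) = Set.univ ∧
      ∀ j, ∃ s : C(U j, C(unitInterval, X)),
        ∀ (x : U j) (i : Fin n) (t : unitInterval),
          (t : ℝ) = ((i : ℕ) : ℝ) / ((n : ℝ) - 1) → s x t = (x : Fin n → X) i) ↔
    (∃ V : Fin k → Set (Fin n → X), (∀ j, IsOpen (V j)) ∧ (⋃ j, V j) = Set.univ ∧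
      ∀ j (i l : Fin n),
        ((⟨fun x => x i, continuous_apply i⟩ : C(Fin n → X, X)).restrict (V j)).Homotopic
          ((⟨fun x => x l, continuous_apply l⟩ : C(Fin n → X, X)).restrict (V j))) := by
  obtain ⟨m, rfl⟩ : ∃ m, n = m + 1 := ⟨n - 1, by omega⟩
  have hm : ((m + 1 : ℕ) : ℝ) - 1 = m := by push_cast; ring
  simp only [hm]
  constructor
  · rintro ⟨U, hUo, hUc, hs⟩
    refine ⟨U, hUo, hUc, fun j i l => ?_⟩
    obtain ⟨s, hs⟩ := hs j
    exact ContinuousMap.homotopic_of_eq_eval s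
      (PathConnectedSpace.joined ⟨_, natCast_div_mem_unitInterval i.is_le⟩
        ⟨_, natCast_div_mem_unitInterval l.is_le⟩)
      (fun x => (hs x i _ rfl).symm) (fun x => (hs x l _ rfl).symm)
  · rintro ⟨V, hVo, hVc, hH⟩
    exact ⟨V, hVo, hVc, fun j => ContinuousMap.exists_path_family_through fun i => hH j i 0⟩

/-- `TC_n(X) ≤ k` (existence of an open cover of `Xⁿ` by `k` sets with
continuous sections of the path fibration through all coordinates at the times
`i/(n-1)`, `i : Fin n`) is equivalent to the existence of an open cover of `Xⁿ` by
`k` sets on each of which any two coordinate projections are homotopic. -/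
theorem statement3 {X : Type*} [TopologicalSpace X] (n k : ℕ) (hn : 2 ≤ n) (hk : 1 ≤ k) :
    (∃ U : Fin k → Set (Fin n → X), (∀ j, IsOpen (U j)) ∧ (⋃ j, U j) = Set.univ ∧
      ∀ j, ∃ s : C(U j, C(unitInterval, X)),
        ∀ (x : U j) (i : Fin n) (t : unitInterval),
          (t : ℝ) = ((i : ℕ) : ℝ) / ((n : ℝ) - 1) → s x t = (x : Fin n → X) i) ↔
    (∃ V : Fin k → Set (Fin n → X), (∀ j, IsOpen (V j)) ∧ (⋃ j, V j) = Set.univ ∧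
      ∀ j (i l : Fin n),
        ((⟨fun x => x i, continuous_apply i⟩ : C(Fin n → X, X)).restrict (V j)).Homotopic
          ((⟨fun x => x l, continuous_apply l⟩ : C(Fin n → X, X)).restrict (V j))) :=
  statement3_general n k hn
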